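/- Let ABC be a triangle and P a point not on its circumcircle, with pedal triangle A'B'C' (projections of P onto BC, CA, AB). Then triangle A'B'C' is nondegenerate (A', B', C' are not collinear). -/

import Mathlib

/-!
Write the feet as `A' = B + ta (C - B)`, `B' = C + tb (A - C)`, `C' = A + tc (B - A)`. The signed
area of `A'B'C'` is `(1 - ta)(1 - tb)(1 - tc) + ta tb tc` times that of `ABC`. For feet of
perpendiculars, `ta |BC|² = ⟪P - B, C - B⟫` and so on; expanding, this factor times
`|BC|² |CA|² |AB|²` equals `(R² - OP²)` times the squared doubled area of `ABC`. So the factor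
vanishes only when `P` lies on the circumcircle.
-/

open EuclideanGeometry Real

noncomputable def triArea (X Y Z : EuclideanSpace ℝ (Fin 2)) : ℝ :=
  |(Y 0 - X 0) * (Z 1 - X 1) - (Y 1 - X 1) * (Z 0 - X 0)| / 2

/-- `F` is the foot of the perpendicular from `P` to the line through `X` and `Y`. -/
def IsFoot (P F X Y : EuclideanSpace ℝ (Fin 2)) : Prop :=
  F ∈ affineSpan ℝ ({X, Y} : Set (EuclideanSpace ℝ (Fin 2))) ∧
    inner ℝ (P - F) (Y - X) = (0 : ℝ)

open scoped RealInnerProductSpace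

local notation "ℝ²" => EuclideanSpace ℝ (Fin 2)

def cross (u v : ℝ²) : ℝ := u 0 * v 1 - u 1 * v 0

lemma EuclideanSpace.inner_fin_two (u v : ℝ²) : ⟪u, v⟫ = u 0 * v 0 + u 1 * v 1 := by
  simp [PiLp.inner_apply, Fin.sum_univ_two, mul_comm]

lemma EuclideanSpace.norm_sq_fin_two (u : ℝ²) : ‖u‖ ^ 2 = u 0 ^ 2 + u 1 ^ 2 := by
  simp [EuclideanSpace.real_norm_sq_eq, Fin.sum_univ_two]

lemma linearIndependent_pair_iff_cross_ne_zero {u v : ℝ²} :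
    LinearIndependent ℝ ![u, v] ↔ cross u v ≠ 0 := by
  rw [LinearIndependent.pair_iff]
  constructor
  · intro h huv
    have hrel : ∀ i, v i • u + (-u i) • v = 0 := by
      unfold cross at huv
      intro i; ext j; fin_cases i <;> fin_cases j <;> simp <;> linarith
    obtain ⟨-, hu₀⟩ := h _ _ (hrel 0)
    obtain ⟨-, hu₁⟩ := h _ _ (hrel 1)
    have hu : u = 0 := by
      ext j; fin_cases j
      exacts [neg_eq_zero.1 hu₀, neg_eq_zero.1 hu₁]
    exact one_ne_zero (h 1 0 (by simp [hu])).1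
  · intro huv s t hst
    have e₀ : s * u 0 + t * v 0 = 0 := by simpa using congr($hst 0)
    have e₁ : s * u 1 + t * v 1 = 0 := by simpa using congr($hst 1)
    refine ⟨?_, ?_⟩
    · refine (mul_eq_zero.1 ?_).resolve_right huv
      unfold cross; linear_combination v 1 * e₀ - v 0 * e₁
    · refine (mul_eq_zero.1 ?_).resolve_right huv
      unfold cross; linear_combination u 0 * e₁ - u 1 * e₀

lemma collinear_iff_cross_eq_zero {X Y Z : ℝ²} :
    Collinear ℝ {X, Y, Z} ↔ cross (Y - X) (Z - X) = 0 := by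
  have hvsub : (fun i : {i : Fin 3 // i ≠ 0} ↦ ![X, Y, Z] i -ᵥ ![X, Y, Z] 0) ∘
      finSuccAboveEquiv 0 = ![Y - X, Z - X] := by
    ext i : 1; fin_cases i <;> rfl
  rw [collinear_iff_not_affineIndependent_set, affineIndependent_iff_linearIndependent_vsub ℝ _ 0,
    ← linearIndependent_equiv' _ hvsub, linearIndependent_pair_iff_cross_ne_zero, not_not]

lemma IsFoot.exists_eq_lineMap {P F X Y : ℝ²} (h : IsFoot P F X Y) :
    ∃ t : ℝ, F = AffineMap.lineMap X Y t ∧ t * ‖Y - X‖ ^ 2 = ⟪P - X, Y - X⟫ := by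
  obtain ⟨hF, hPF⟩ := h
  obtain ⟨t, rfl⟩ := mem_affineSpan_pair_iff_exists_lineMap_eq.1 hF
  refine ⟨t, rfl, ?_⟩
  have hPX : P - X = (P - AffineMap.lineMap X Y t) + t • (Y - X) := by
    rw [AffineMap.lineMap_apply, vsub_eq_sub, vadd_eq_add]; abel
  rw [hPX, inner_add_left, hPF, inner_smul_left, real_inner_self_eq_norm_sq]
  simp

lemma cross_lineMap_sides (A B C : ℝ²) (ta tb tc : ℝ) :
    cross (AffineMap.lineMap C A tb - AffineMap.lineMap B C ta)
        (AffineMap.lineMap A B tc - AffineMap.lineMap B C ta) =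
      ((1 - ta) * (1 - tb) * (1 - tc) + ta * tb * tc) * cross (B - A) (C - A) := by
  simp only [cross, AffineMap.lineMap_apply_module, PiLp.sub_apply, PiLp.add_apply,
    PiLp.smul_apply, smul_eq_mul]
  ring

lemma pedal_inner_identity (A B C P : ℝ²) :
    ⟪C - P, C - B⟫ * ⟪A - P, A - C⟫ * ⟪B - P, B - A⟫ +
        ⟪P - B, C - B⟫ * ⟪P - C, A - C⟫ * ⟪P - A, B - A⟫ =
      cross (B - A) (C - A) * (cross (B - P) (C - P) * ‖P - A‖ ^ 2 +
        cross (C - P) (A - P) * ‖P - B‖ ^ 2 + cross (A - P) (B - P) * ‖P - C‖ ^ 2) := by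
  simp only [cross, EuclideanSpace.inner_fin_two, EuclideanSpace.norm_sq_fin_two, PiLp.sub_apply]
  ring

/- The weights `cross (B - P) (C - P) / cross (B - A) (C - A)`, ... are the barycentric coordinates
of `P`, so this is Lagrange's identity `∑ λ_X PX² = R² - OP²` for the circumcentre `O`. -/
lemma sum_cross_mul_norm_sq_eq_of_dist_eq {A B C O P : ℝ²} {R : ℝ}
    (hOA : dist O A = R) (hOB : dist O B = R) (hOC : dist O C = R) :
    cross (B - P) (C - P) * ‖P - A‖ ^ 2 + cross (C - P) (A - P) * ‖P - B‖ ^ 2 +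
        cross (A - P) (B - P) * ‖P - C‖ ^ 2 =
      cross (B - A) (C - A) * (R ^ 2 - dist O P ^ 2) := by
  have norm_sq_of_dist : ∀ {X : ℝ²}, dist O X = R → ‖O - X‖ ^ 2 = R ^ 2 := fun h ↦ by
    rw [← dist_eq_norm, h]
  rw [dist_eq_norm]
  linear_combination (norm := skip) cross (B - P) (C - P) * norm_sq_of_dist hOA +
    cross (C - P) (A - P) * norm_sq_of_dist hOB + cross (A - P) (B - P) * norm_sq_of_dist hOC
  simp only [cross, EuclideanSpace.norm_sq_fin_two, PiLp.sub_apply]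
  ring

lemma pedal_factor_mul_norm_sq {A B C O P : ℝ²} {R ta tb tc : ℝ}
    (hOA : dist O A = R) (hOB : dist O B = R) (hOC : dist O C = R)
    (hta : ta * ‖C - B‖ ^ 2 = ⟪P - B, C - B⟫) (htb : tb * ‖A - C‖ ^ 2 = ⟪P - C, A - C⟫)
    (htc : tc * ‖B - A‖ ^ 2 = ⟪P - A, B - A⟫) :
    ((1 - ta) * (1 - tb) * (1 - tc) + ta * tb * tc) * (‖C - B‖ ^ 2 * ‖A - C‖ ^ 2 * ‖B - A‖ ^ 2) =
      (R ^ 2 - dist O P ^ 2) * cross (B - A) (C - A) ^ 2 := by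
  have one_sub_mul {X Y : ℝ²} {t : ℝ} (ht : t * ‖Y - X‖ ^ 2 = ⟪P - X, Y - X⟫) :
      (1 - t) * ‖Y - X‖ ^ 2 = ⟪Y - P, Y - X⟫ := by
    rw [sub_mul, one_mul, ht, ← real_inner_self_eq_norm_sq, ← inner_sub_left,
      sub_sub_sub_cancel_right]
  calc _ = (1 - ta) * ‖C - B‖ ^ 2 * ((1 - tb) * ‖A - C‖ ^ 2) * ((1 - tc) * ‖B - A‖ ^ 2) +
        ta * ‖C - B‖ ^ 2 * (tb * ‖A - C‖ ^ 2) * (tc * ‖B - A‖ ^ 2) := by ring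
    _ = ⟪C - P, C - B⟫ * ⟪A - P, A - C⟫ * ⟪B - P, B - A⟫ +
        ⟪P - B, C - B⟫ * ⟪P - C, A - C⟫ * ⟪P - A, B - A⟫ := by
      rw [one_sub_mul hta, one_sub_mul htb, one_sub_mul htc, hta, htb, htc]
    _ = cross (B - A) (C - A) * (cross (B - A) (C - A) * (R ^ 2 - dist O P ^ 2)) := by
      rw [pedal_inner_identity, sum_cross_mul_norm_sq_eq_of_dist_eq hOA hOB hOC]
    _ = _ := by ring

theorem pedal_nondegenerate (A B C O P A' B' C' : EuclideanSpace ℝ (Fin 2)) (R : ℝ)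
    (hABC : AffineIndependent ℝ ![A, B, C])
    (hOA : dist O A = R) (hOB : dist O B = R) (hOC : dist O C = R)
    (hP : dist O P ≠ R)
    (hA' : IsFoot P A' B C) (hB' : IsFoot P B' C A) (hC' : IsFoot P C' A B) :
    ¬ Collinear ℝ ({A', B', C'} : Set (EuclideanSpace ℝ (Fin 2))) := by
  obtain ⟨ta, rfl, hta⟩ := hA'.exists_eq_lineMap
  obtain ⟨tb, rfl, htb⟩ := hB'.exists_eq_lineMap
  obtain ⟨tc, rfl, htc⟩ := hC'.exists_eq_lineMap
  have hS : cross (B - A) (C - A) ≠ 0 :=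
    mt collinear_iff_cross_eq_zero.2 (affineIndependent_iff_not_collinear_set.1 hABC)
  rw [collinear_iff_cross_eq_zero, cross_lineMap_sides, mul_eq_zero, or_iff_left hS]
  intro hfactor
  have hpower := pedal_factor_mul_norm_sq hOA hOB hOC hta htb htc
  rw [hfactor, zero_mul, eq_comm, mul_eq_zero, or_iff_left (pow_ne_zero 2 hS), sub_eq_zero]
    at hpower
  exact hP ((pow_left_inj₀ dist_nonneg (hOA ▸ dist_nonneg) two_ne_zero).1 hpower.symm)
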